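/- arXiv:0812.4511 — 3 statements merged into one kernel-verified Lean document; each statement's English description precedes it below -/
import Mathlib

section
/- For any unitaries A,B ∈ U(2) with det A = det B, the conjugate G(A,B)† (Z⊗X) G(A,B) is a (complex) linear combination of the four matrices Z⊗X, Z⊗Y, X⊗I, Y⊗I. -/
open Matrix Kronecker
noncomputable section

/-- 2×2 complex matrices -/
abbrev M2 := Matrix (Fin 2) (Fin 2) ℂ
/-- 4×4 complex matrices, indexed by two qubits -/
abbrev M4 := Matrix (Fin 2 × Fin 2) (Fin 2 × Fin 2) ℂ

/-- Pauli X -/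
def PX : M2 := !![0, 1; 1, 0]
/-- Pauli Y -/
def PY : M2 := !![0, -Complex.I; Complex.I, 0]
/-- Pauli Z -/
def PZ : M2 := !![1, 0; 0, -1]

/-- The matchgate matrix `G(A,B)`: `A` acts on the even-parity subspace
spanned by `|00⟩, |11⟩` and `B` on the odd-parity subspace spanned by
`|01⟩, |10⟩`. -/
def G (A B : M2) : M4 := fun p q =>
  if p.1 = p.2 then (if q.1 = q.2 then A p.1 q.1 else 0)
  else (if q.1 ≠ q.2 then B p.1 q.1 else 0)

/-!
Order the two-qubit basis by parity, the even states `|k k⟩` first and the odd states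
`|k, k+1⟩` second. Then `G(A,B) = diag(A, B)`, and every block matrix `[[0, C], [-adj C, 0]]`
is a combination of `Z⊗X, Z⊗Y, X⊗I, Y⊗I`, with `Z⊗X` the case `C = Z`. Conjugating by `G`
gives `[[0, A†CB], [-B† adj(C) A, 0]]`, which has the same shape because for unitaries
`adj(A†CB) = adj B · adj C · adj A† = det B · conj(det A) · B† adj(C) A`
and `det B · conj(det A) = |det A|² = 1`.
-/

namespace Matrix

variable {n α : Type*} [Fintype n] [DecidableEq n] [CommRing α] [StarRing α]

theorem adjugate_eq_det_smul_conjTranspose {U : Matrix n n α} (hU : U ∈ unitaryGroup n α) :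
    adjugate U = U.det • Uᴴ := by
  have hUU : Uᴴ * U = 1 := mem_unitaryGroup_iff'.mp hU
  calc adjugate U = Uᴴ * U * adjugate U := by rw [hUU, Matrix.one_mul]
    _ = U.det • Uᴴ := by rw [Matrix.mul_assoc, mul_adjugate, Matrix.mul_smul, Matrix.mul_one]

theorem adjugate_conjTranspose_mul_mul {A B : Matrix n n α} (hA : A ∈ unitaryGroup n α)
    (hB : B ∈ unitaryGroup n α) (hdet : A.det = B.det) (C : Matrix n n α) :
    adjugate (Aᴴ * C * B) = Bᴴ * adjugate C * A := by
  have hunit : A.det * star A.det = 1 := Unitary.mul_star_self_of_mem (det_of_mem_unitary hA)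
  rw [adjugate_mul_distrib, adjugate_mul_distrib, ← adjugate_conjTranspose,
    adjugate_eq_det_smul_conjTranspose hA, adjugate_eq_det_smul_conjTranspose hB,
    conjTranspose_smul, conjTranspose_conjTranspose, ← hdet, Matrix.smul_mul, Matrix.mul_smul,
    Matrix.mul_smul, smul_smul, hunit, one_smul, Matrix.mul_assoc]

end Matrix

def parityEquiv : Fin 2 × Fin 2 ≃ Fin 2 ⊕ Fin 2 where
  toFun p := if p.1 = p.2 then .inl p.1 else .inr p.1
  invFun := Sum.elim (fun k => (k, k)) (fun k => (k, k + 1))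
  left_inv := by decide
  right_inv := by decide

def parityOffDiag (C : M2) : M4 :=
  (fromBlocks 0 C (-adjugate C) 0).submatrix parityEquiv parityEquiv

theorem G_eq_submatrix_fromBlocks (A B : M2) :
    G A B = (fromBlocks A 0 0 B).submatrix parityEquiv parityEquiv := by
  ext ⟨i, j⟩ ⟨k, l⟩
  fin_cases i <;> fin_cases j <;> fin_cases k <;> fin_cases l <;> rfl

theorem conjTranspose_G_mul_parityOffDiag_mul_G {A B : M2}
    (hA : A ∈ unitaryGroup (Fin 2) ℂ) (hB : B ∈ unitaryGroup (Fin 2) ℂ) (hdet : A.det = B.det)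
    (C : M2) : (G A B)ᴴ * parityOffDiag C * G A B = parityOffDiag (Aᴴ * C * B) := by
  rw [G_eq_submatrix_fromBlocks, parityOffDiag, parityOffDiag, conjTranspose_submatrix,
    submatrix_mul_equiv, submatrix_mul_equiv, fromBlocks_conjTranspose, fromBlocks_multiply,
    fromBlocks_multiply, adjugate_conjTranspose_mul_mul hA hB hdet]
  simp [Matrix.mul_assoc]

theorem parityOffDiag_eq (C : M2) :
    parityOffDiag C =
      ((C 0 0 - C 1 1) / 2) • (PZ ⊗ₖ PX) + (Complex.I * (C 0 0 + C 1 1) / 2) • (PZ ⊗ₖ PY) +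
        ((C 0 1 + C 1 0) / 2) • (PX ⊗ₖ (1 : M2)) +
        (Complex.I * (C 0 1 - C 1 0) / 2) • (PY ⊗ₖ (1 : M2)) := by
  ext ⟨i, j⟩ ⟨k, l⟩
  fin_cases i <;> fin_cases j <;> fin_cases k <;> fin_cases l <;>
    simp [parityOffDiag, parityEquiv, adjugate_fin_two, PX, PY, PZ] <;>
    ring_nf <;> simp only [Complex.I_sq] <;> ring

theorem PZ_kronecker_PX_eq_parityOffDiag : PZ ⊗ₖ PX = parityOffDiag PZ := by
  ext ⟨i, j⟩ ⟨k, l⟩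
  fin_cases i <;> fin_cases j <;> fin_cases k <;> fin_cases l <;>
    simp [parityOffDiag, parityEquiv, adjugate_fin_two, PX, PZ]

theorem parityOffDiag_mem_span (C : M2) :
    parityOffDiag C ∈ Submodule.span ℂ
      ({PZ ⊗ₖ PX, PZ ⊗ₖ PY, PX ⊗ₖ (1 : M2), PY ⊗ₖ (1 : M2)} : Set M4) := by
  rw [parityOffDiag_eq]
  refine add_mem (add_mem (add_mem ?_ ?_) ?_) ?_ <;>
    exact Submodule.smul_mem _ _ (Submodule.subset_span (by simp))

theorem stmt6 (A B : M2)
    (hA : A ∈ Matrix.unitaryGroup (Fin 2) ℂ)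
    (hB : B ∈ Matrix.unitaryGroup (Fin 2) ℂ)
    (hdet : A.det = B.det) :
    (G A B)ᴴ * (PZ ⊗ₖ PX) * G A B ∈
      Submodule.span ℂ ({PZ ⊗ₖ PX, PZ ⊗ₖ PY, PX ⊗ₖ (1 : M2), PY ⊗ₖ (1 : M2)} :
        Set M4) := by
  have hconj := conjTranspose_G_mul_parityOffDiag_mul_G hA hB hdet PZ
  rw [← PZ_kronecker_PX_eq_parityOffDiag] at hconj
  rw [hconj]
  exact parityOffDiag_mem_span _
end
end

section
/- There exist unitaries A,B ∈ U(2) with det A = det B such that G(A,B)† (Z⊗I) G(A,B) does not lie in the linear span of {Z⊗Z, Z⊗X, Z⊗Y, X⊗I, Y⊗I, I⊗I, Z⊗I}. -/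
open Matrix Kronecker
noncomputable section

def phi : M4 →ₗ[ℂ] ℂ where
  toFun M := M (0,0) (0,0) - M (0,1) (0,1) + M (1,0) (1,0) - M (1,1) (1,1)
  map_add' M N := by simp; ring
  map_smul' c M := by simp; ring


theorem stmt8 :
    ∃ A B : M2, A ∈ Matrix.unitaryGroup (Fin 2) ℂ ∧
      B ∈ Matrix.unitaryGroup (Fin 2) ℂ ∧ A.det = B.det ∧
      (G A B)ᴴ * (PZ ⊗ₖ (1 : M2)) * G A B ∉
        Submodule.span ℂ
          ({PZ ⊗ₖ PZ, PZ ⊗ₖ PX, PZ ⊗ₖ PY, PX ⊗ₖ (1 : M2), PY ⊗ₖ (1 : M2),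
            (1 : M2) ⊗ₖ (1 : M2), PZ ⊗ₖ (1 : M2)} : Set M4) := by
  refine ⟨1, Complex.I • PX, ?_, ?_, ?_, ?_⟩
  · exact Submonoid.one_mem _
  · rw [Matrix.mem_unitaryGroup_iff]
    ext i j
    fin_cases i <;> fin_cases j <;>
      simp [mul_apply, Fin.sum_univ_two, PX, Matrix.one_apply, Complex.ext_iff]
  · simp [PX, Matrix.det_fin_two_of]
  · intro hmem
    have hker : Submodule.span ℂ
        ({PZ ⊗ₖ PZ, PZ ⊗ₖ PX, PZ ⊗ₖ PY, PX ⊗ₖ (1 : M2), PY ⊗ₖ (1 : M2),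
          (1 : M2) ⊗ₖ (1 : M2), PZ ⊗ₖ (1 : M2)} : Set M4) ≤ LinearMap.ker phi := by
      rw [Submodule.span_le]
      intro x hx
      simp only [Set.mem_insert_iff, Set.mem_singleton_iff] at hx
      rcases hx with h|h|h|h|h|h|h <;> subst h <;>
        simp [LinearMap.mem_ker, phi, kroneckerMap_apply, PZ, PX, PY, Matrix.one_apply]
    have h0 : phi ((G 1 (Complex.I • PX))ᴴ * (PZ ⊗ₖ (1 : M2)) * G 1 (Complex.I • PX)) = 0 :=
      hker hmem
    have h4 : phi ((G 1 (Complex.I • PX))ᴴ * (PZ ⊗ₖ (1 : M2)) * G 1 (Complex.I • PX)) = 4 := by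
      simp [phi, mul_apply, Fintype.sum_prod_type, Fin.sum_univ_two, conjTranspose_apply,
        G, PZ, PX, kroneckerMap_apply, Matrix.one_apply]
      norm_num
    rw [h0] at h4
    norm_num at h4
end
end

section
/- If C is an n-qubit unitary such that conjugation by C maps every n-fold tensor product of Pauli matrices (up to phase) to another such product up to phase, and |ψ₀⟩ = |a₁⟩⊗...⊗|aₙ⟩ is a product state, then the difference p₀ - p₁ of outcome probabilities for a Z-measurement on qubit 1 of C|ψ₀⟩ equals a product ∏ₖ⟨aₖ|Pₖ|aₖ⟩ times a phase, for some Pauli matrices Pₖ ∈ {I,X,Y,Z}. -/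
open Matrix Kronecker
noncomputable section

/-- Tensor (Kronecker) product of `n` single-qubit operators, as a matrix on
`(ℂ²)^⊗n`. -/
def site (n : ℕ) (f : Fin n → M2) :
    Matrix (Fin n → Fin 2) (Fin n → Fin 2) ℂ :=
  fun a b => ∏ k, f k (a k) (b k)

/-! Conjugating `Z ⊗ I ⊗ ⋯ ⊗ I` by a Clifford unitary gives `c • (Q₁ ⊗ ⋯ ⊗ Qₙ)` with `|c| = 1`, and
the expectation of a tensor product of operators in a product state factors over the sites. -/

lemma Fintype.sum_sum_prod_eq_prod_sum_sum {ι R : Type*} [Fintype ι] [DecidableEq ι]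
    [CommSemiring R] {α β : ι → Type*} [∀ i, Fintype (α i)] [∀ i, Fintype (β i)]
    (f : ∀ i, α i → β i → R) :
    ∑ x : ∀ i, α i, ∑ y : ∀ i, β i, ∏ i, f i (x i) (y i) = ∏ i, ∑ a, ∑ b, f i a b := by
  simp only [Fintype.prod_sum]

lemma star_dotProduct_site_mulVec (n : ℕ) (Q : Fin n → M2) (a : Fin n → Fin 2 → ℂ) :
    star (fun x : Fin n → Fin 2 => ∏ k, a k (x k)) ⬝ᵥ
      (site n Q).mulVec (fun x : Fin n → Fin 2 => ∏ k, a k (x k)) =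
    ∏ k, star (a k) ⬝ᵥ (Q k).mulVec (a k) := by
  simp only [dotProduct, mulVec, site, Pi.star_apply, star_prod, Finset.mul_sum,
    ← Finset.prod_mul_distrib, ← Fintype.sum_sum_prod_eq_prod_sum_sum]

theorem stmt15_general (n : ℕ) (hn : 0 < n)
    (C : Matrix (Fin n → Fin 2) (Fin n → Fin 2) ℂ)
    (hconj : ∀ P : Fin n → M2, (∀ k, P k ∈ ({1, PX, PY, PZ} : Set M2)) →
      ∃ (c : ℂ) (Q : Fin n → M2), ‖c‖ = 1 ∧
        (∀ k, Q k ∈ ({1, PX, PY, PZ} : Set M2)) ∧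
        Cᴴ * site n P * C = c • site n Q)
    (a : Fin n → Fin 2 → ℂ) :
    ∃ (c : ℂ) (Q : Fin n → M2), ‖c‖ = 1 ∧
      (∀ k, Q k ∈ ({1, PX, PY, PZ} : Set M2)) ∧
      star (fun x : Fin n → Fin 2 => ∏ k, a k (x k)) ⬝ᵥ
          (Cᴴ * site n (fun m => if m = (⟨0, hn⟩ : Fin n) then PZ else 1) *
            C).mulVec (fun x : Fin n → Fin 2 => ∏ k, a k (x k)) =
        c * ∏ k, star (a k) ⬝ᵥ (Q k).mulVec (a k) := by
  have hZ : ∀ k, (if k = (⟨0, hn⟩ : Fin n) then PZ else 1) ∈ ({1, PX, PY, PZ} : Set M2) := by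
    intro k
    split_ifs <;> simp
  obtain ⟨c, Q, hc, hQ, hconjZ⟩ := hconj _ hZ
  refine ⟨c, Q, hc, hQ, ?_⟩
  rw [hconjZ, smul_mulVec, dotProduct_smul, smul_eq_mul, star_dotProduct_site_mulVec]

theorem stmt15 (n : ℕ) (hn : 0 < n)
    (C : Matrix (Fin n → Fin 2) (Fin n → Fin 2) ℂ)
    (hC : C ∈ Matrix.unitaryGroup (Fin n → Fin 2) ℂ)
    (hconj : ∀ P : Fin n → M2, (∀ k, P k ∈ ({1, PX, PY, PZ} : Set M2)) →
      ∃ (c : ℂ) (Q : Fin n → M2), ‖c‖ = 1 ∧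
        (∀ k, Q k ∈ ({1, PX, PY, PZ} : Set M2)) ∧
        Cᴴ * site n P * C = c • site n Q)
    (a : Fin n → Fin 2 → ℂ) :
    ∃ (c : ℂ) (Q : Fin n → M2), ‖c‖ = 1 ∧
      (∀ k, Q k ∈ ({1, PX, PY, PZ} : Set M2)) ∧
      star (fun x : Fin n → Fin 2 => ∏ k, a k (x k)) ⬝ᵥ
          (Cᴴ * site n (fun m => if m = (⟨0, hn⟩ : Fin n) then PZ else 1) *
            C).mulVec (fun x : Fin n → Fin 2 => ∏ k, a k (x k)) =
        c * ∏ k, star (a k) ⬝ᵥ (Q k).mulVec (a k) :=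
  stmt15_general n hn C hconj a
end
end
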